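/- (Lindelöf-type theorem for hyperbolic distortion, half-plane version, along the real axis) Let F : ℍ → ℍ be holomorphic. Suppose (ζ_n) ⊆ ℍ is a sequence converging to ∞ contained in a sector {|arg ζ| < θ} with θ < π/2, with bounded hyperbolic steps k(ζ_n, ζ_{n+1}) ≤ M, and with D_h F(ζ_n) → 1. Then D_h F(t) → 1 as t → +∞ along the positive real axis. -/

import Mathlib

open Set Filter

def HalfPlane : Set ℂ := {z : ℂ | 0 < z.re}

/-- Pseudo-hyperbolic distance on the right half-plane. -/
noncomputable def pdistH (z w : ℂ) : ℝ :=
  ‖z - w‖ / ‖z + (starRingEnd ℂ) w‖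

/-- Hyperbolic distance on the right half-plane. -/
noncomputable def hdistH (z w : ℂ) : ℝ :=
  Real.log ((1 + pdistH z w) / (1 - pdistH z w))

noncomputable def DhH (F : ℂ → ℂ) (ζ : ℂ) : ℝ :=
  ζ.re / (F ζ).re * ‖deriv F ζ‖

/-!
The hyperbolic difference quotient `hypDslope F z` is a holomorphic map of the half-plane into
the closed unit disc with `‖hypDslope F z z‖ = DhH F z`. By the maximum principle either
`DhH F ≡ 1`, or all these maps land in the open disc; then Schwarz–Pick for them, together with
the triangle inequality through `0` in the disc, gives the Golusin-type estimate
`artanh (DhH F z) ≤ artanh (DhH F w) + hdistH z w`.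

A large `t > 0` lies between `‖ζ n‖` and `‖ζ (n + 1)‖` for some late `n`. Taking moduli
contracts `hdistH`, so `t` is within `M` of `‖ζ n‖`, and the sector condition puts `‖ζ n‖`
within a distance depending only on `θ` of `ζ n`. Hence `artanh (DhH F t)` is at least
`artanh (DhH F (ζ n))` minus a constant, and the latter tends to `∞`.
-/

open Topology ComplexConjugate

lemma isOpen_halfPlane : IsOpen HalfPlane := Complex.isOpen_re_gt 0

lemma convex_halfPlane : Convex ℝ HalfPlane := convex_halfSpace_re_gt 0

lemma ofReal_mem_halfPlane {t : ℝ} (ht : 0 < t) : (t : ℂ) ∈ HalfPlane := by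
  simpa [HalfPlane] using ht

lemma ne_zero_of_mem_halfPlane {z : ℂ} (hz : z ∈ HalfPlane) : z ≠ 0 := by
  rintro rfl
  simp [HalfPlane] at hz

section HalfPlane

variable {z w : ℂ}

lemma norm_sub_lt_norm_add_conj (hz : z ∈ HalfPlane) (hw : w ∈ HalfPlane) :
    ‖z - w‖ < ‖z + conj w‖ := by
  have hzw : 0 < z.re * w.re := mul_pos hz hw
  rw [← sq_lt_sq₀ (norm_nonneg _) (norm_nonneg _), Complex.sq_norm, Complex.sq_norm,
    Complex.normSq_apply, Complex.normSq_apply]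
  simp only [Complex.sub_re, Complex.sub_im, Complex.add_re, Complex.add_im,
    Complex.conj_re, Complex.conj_im]
  nlinarith

lemma add_conj_ne_zero (hz : z ∈ HalfPlane) (hw : w ∈ HalfPlane) : z + conj w ≠ 0 := by
  intro h
  simpa [h] using (norm_nonneg _).trans_lt (norm_sub_lt_norm_add_conj hz hw)

lemma pdistH_nonneg (z w : ℂ) : 0 ≤ pdistH z w := by
  unfold pdistH; positivity

lemma pdistH_pos (hz : z ∈ HalfPlane) (hw : w ∈ HalfPlane) (hne : z ≠ w) : 0 < pdistH z w :=
  div_pos (norm_pos_iff.2 (sub_ne_zero.2 hne)) (norm_pos_iff.2 (add_conj_ne_zero hz hw))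

lemma pdistH_lt_one (hz : z ∈ HalfPlane) (hw : w ∈ HalfPlane) : pdistH z w < 1 :=
  (div_lt_one (norm_pos_iff.2 (add_conj_ne_zero hz hw))).2 (norm_sub_lt_norm_add_conj hz hw)

lemma hdistH_eq_two_mul_artanh (hz : z ∈ HalfPlane) (hw : w ∈ HalfPlane) :
    hdistH z w = 2 * Real.artanh (pdistH z w) := by
  rw [Real.artanh_eq_half_log ⟨by linarith [pdistH_nonneg z w], (pdistH_lt_one hz hw).le⟩,
    hdistH]
  ring

end HalfPlane

noncomputable def diskMobius (c z : ℂ) : ℂ := (z - c) / (1 - conj c * z)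

section Disc

variable {a b c z : ℂ}

lemma one_sub_ne_zero_of_norm_lt_one {u : ℂ} (hu : ‖u‖ < 1) : 1 - u ≠ 0 := by
  intro h
  simp [← sub_eq_zero.1 h] at hu

lemma one_sub_conj_mul_ne_zero (hc : ‖c‖ < 1) (hz : ‖z‖ < 1) : 1 - conj c * z ≠ 0 := by
  refine one_sub_ne_zero_of_norm_lt_one ?_
  rw [norm_mul, Complex.norm_conj]
  nlinarith [norm_nonneg c, norm_nonneg z]

lemma sq_norm_one_sub_conj_mul (c z : ℂ) :
    ‖1 - conj c * z‖ ^ 2 = ‖z - c‖ ^ 2 + (1 - ‖z‖ ^ 2) * (1 - ‖c‖ ^ 2) := by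
  simp only [Complex.sq_norm, Complex.normSq_apply, Complex.sub_re, Complex.sub_im,
    Complex.mul_re, Complex.mul_im, Complex.conj_re, Complex.conj_im, Complex.one_re,
    Complex.one_im]
  ring

lemma norm_diskMobius_lt_one (hc : ‖c‖ < 1) (hz : ‖z‖ < 1) : ‖diskMobius c z‖ < 1 := by
  have hpos : 0 < ‖1 - conj c * z‖ := norm_pos_iff.2 (one_sub_conj_mul_ne_zero hc hz)
  rw [diskMobius, norm_div, div_lt_one hpos, ← sq_lt_sq₀ (norm_nonneg _) hpos.le,
    sq_norm_one_sub_conj_mul]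
  have : 0 < (1 - ‖z‖ ^ 2) * (1 - ‖c‖ ^ 2) := by
    apply mul_pos <;> nlinarith [norm_nonneg c, norm_nonneg z]
  linarith

@[simp] lemma diskMobius_self (c : ℂ) : diskMobius c c = 0 := by simp [diskMobius]

@[simp] lemma diskMobius_zero_left (z : ℂ) : diskMobius 0 z = z := by simp [diskMobius]

/-- Passing to moduli does not increase the pseudo-hyperbolic distance of the disc. -/
lemma norm_sub_norm_le_norm_diskMobius_mul (ha : ‖a‖ < 1) (hb : ‖b‖ < 1) :
    ‖a‖ - ‖b‖ ≤ ‖diskMobius b a‖ * (1 - ‖a‖ * ‖b‖) := by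
  have hpos : 0 < ‖1 - conj b * a‖ := norm_pos_iff.2 (one_sub_conj_mul_ne_zero hb ha)
  have hab : 0 ≤ 1 - ‖a‖ * ‖b‖ := by nlinarith [norm_nonneg a, norm_nonneg b]
  rw [diskMobius, norm_div, div_mul_eq_mul_div, le_div_iff₀ hpos]
  -- With `Q = (1 - ‖a‖²)(1 - ‖b‖²) ≥ 0` we have `‖1 - b̄a‖² = ‖a - b‖² + Q` and
  -- `(1 - ‖a‖‖b‖)² = (‖a‖ - ‖b‖)² + Q`: the claim reduces to the reverse triangle inequality.
  have hQ : 0 ≤ (1 - ‖a‖ ^ 2) * (1 - ‖b‖ ^ 2) := by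
    apply mul_nonneg <;> nlinarith [norm_nonneg a, norm_nonneg b]
  have hreal : (1 - ‖a‖ * ‖b‖) ^ 2 = (‖a‖ - ‖b‖) ^ 2 + (1 - ‖a‖ ^ 2) * (1 - ‖b‖ ^ 2) := by
    ring
  have hrev : (‖a‖ - ‖b‖) ^ 2 ≤ ‖a - b‖ ^ 2 :=
    sq_le_sq' (by linarith [norm_sub_norm_le b a, norm_sub_rev a b]) (norm_sub_norm_le a b)
  apply le_of_sq_le_sq _ (by positivity)
  rw [mul_pow, mul_pow, sq_norm_one_sub_conj_mul, hreal]
  nlinarith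

lemma artanh_le_artanh_add_artanh {x y p : ℝ} (hx : x ∈ Ioo (-1) 1) (hy : y ∈ Ioo (-1) 1)
    (hp : p ∈ Ioo (-1) 1) (h : x - y ≤ p * (1 - x * y)) :
    Real.artanh x ≤ Real.artanh y + Real.artanh p := by
  obtain ⟨hx₀, hx₁⟩ := hx
  obtain ⟨hy₀, hy₁⟩ := hy
  obtain ⟨hp₀, hp₁⟩ := hp
  have hy' : 0 < (1 + y) / (1 - y) := div_pos (by linarith) (by linarith)
  have hp' : 0 < (1 + p) / (1 - p) := div_pos (by linarith) (by linarith)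
  rw [Real.artanh_eq_half_log ⟨hx₀.le, hx₁.le⟩, Real.artanh_eq_half_log ⟨hy₀.le, hy₁.le⟩,
    Real.artanh_eq_half_log ⟨hp₀.le, hp₁.le⟩, ← mul_add, ← Real.log_mul hy'.ne' hp'.ne']
  gcongr
  · exact div_pos (by linarith) (by linarith)
  rw [div_mul_div_comm, div_le_div_iff₀ (by linarith) (by nlinarith)]
  nlinarith

lemma artanh_norm_le_add (ha : ‖a‖ < 1) (hb : ‖b‖ < 1) :
    Real.artanh ‖a‖ ≤ Real.artanh ‖b‖ + Real.artanh ‖diskMobius b a‖ :=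
  artanh_le_artanh_add_artanh ⟨by linarith [norm_nonneg a], ha⟩ ⟨by linarith [norm_nonneg b], hb⟩
    ⟨by linarith [norm_nonneg (diskMobius b a)], norm_diskMobius_lt_one hb ha⟩
    (norm_sub_norm_le_norm_diskMobius_mul ha hb)

end Disc

/-- The Cayley transform of the half-plane onto the unit disc sending `a` to `0`. -/
noncomputable def cayley (a z : ℂ) : ℂ := (z - a) / (z + conj a)

noncomputable def cayleyInv (a u : ℂ) : ℂ := (a + conj a * u) / (1 - u)

section SchwarzPick

variable {a b : ℂ}

lemma norm_cayley (a z : ℂ) : ‖cayley a z‖ = pdistH z a := by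
  rw [cayley, norm_div, pdistH]

@[simp] lemma cayley_self (a : ℂ) : cayley a a = 0 := by simp [cayley]

lemma cayleyInv_cayley (ha : a ∈ HalfPlane) (hb : b ∈ HalfPlane) :
    cayleyInv a (cayley a b) = b := by
  have hba := add_conj_ne_zero hb ha
  have haa := add_conj_ne_zero ha ha
  have hsub : 1 - cayley a b = (a + conj a) / (b + conj a) := by
    rw [cayley]; field_simp; ring
  rw [cayleyInv, hsub, cayley]
  field_simp
  ring

lemma cayleyInv_zero (a : ℂ) : cayleyInv a 0 = a := by simp [cayleyInv]

lemma mapsTo_cayleyInv (ha : a ∈ HalfPlane) :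
    MapsTo (cayleyInv a) (Metric.ball 0 1) HalfPlane := by
  intro u hu
  rw [mem_ball_zero_iff] at hu
  have hu2 : u.re ^ 2 + u.im ^ 2 < 1 := by
    have := Complex.sq_norm u
    rw [Complex.normSq_apply] at this
    nlinarith [norm_nonneg u]
  have hn : 0 < Complex.normSq (1 - u) :=
    Complex.normSq_pos.2 (one_sub_ne_zero_of_norm_lt_one hu)
  have ha' : 0 < a.re := ha
  show 0 < (cayleyInv a u).re
  rw [cayleyInv, Complex.div_re, ← add_div]
  apply div_pos _ hn
  simp only [Complex.add_re, Complex.add_im, Complex.mul_re, Complex.mul_im,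
    Complex.conj_re, Complex.conj_im, Complex.sub_re, Complex.sub_im, Complex.one_re,
    Complex.one_im]
  nlinarith

lemma differentiableOn_cayleyInv (a : ℂ) :
    DifferentiableOn ℂ (cayleyInv a) (Metric.ball 0 1) :=
  DifferentiableOn.div (by fun_prop) (by fun_prop) fun _ hu =>
    one_sub_ne_zero_of_norm_lt_one (mem_ball_zero_iff.1 hu)

lemma differentiableOn_diskMobius {c : ℂ} (hc : ‖c‖ < 1) :
    DifferentiableOn ℂ (diskMobius c) (Metric.ball 0 1) :=
  DifferentiableOn.div (by fun_prop) (by fun_prop) fun _ hz =>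
    one_sub_conj_mul_ne_zero hc (mem_ball_zero_iff.1 hz)

/-- Schwarz–Pick lemma for holomorphic maps from the half-plane to the unit disc: Schwarz's lemma
for `diskMobius (g a) ∘ g ∘ cayleyInv a`, a self-map of the disc fixing `0`. -/
lemma norm_diskMobius_le_pdistH {g : ℂ → ℂ} (hg : DifferentiableOn ℂ g HalfPlane)
    (hg1 : ∀ x ∈ HalfPlane, ‖g x‖ < 1) (ha : a ∈ HalfPlane) (hb : b ∈ HalfPlane) :
    ‖diskMobius (g a) (g b)‖ ≤ pdistH b a := by
  set G : ℂ → ℂ := fun u => diskMobius (g a) (g (cayleyInv a u))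
  have hgInv : MapsTo (g ∘ cayleyInv a) (Metric.ball 0 1) (Metric.ball 0 1) :=
    fun u hu => mem_ball_zero_iff.2 (hg1 _ (mapsTo_cayleyInv ha hu))
  have hG : DifferentiableOn ℂ G (Metric.ball 0 1) :=
    (differentiableOn_diskMobius (hg1 a ha)).comp
      (hg.comp (differentiableOn_cayleyInv a) (mapsTo_cayleyInv ha)) hgInv
  have hGmaps : MapsTo G (Metric.ball 0 1) (Metric.closedBall 0 1) := fun u hu =>
    Metric.ball_subset_closedBall <| mem_ball_zero_iff.2 <|
      norm_diskMobius_lt_one (hg1 a ha) (mem_ball_zero_iff.1 (hgInv hu))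
  have hG0 : G 0 = 0 := by simp [G, cayleyInv_zero]
  have hcay : ‖cayley a b‖ < 1 := by
    rw [norm_cayley]; exact pdistH_lt_one hb ha
  simpa [G, cayleyInv_cayley ha hb, norm_cayley] using
    Complex.norm_le_norm_of_mapsTo_ball hG hGmaps hG0 hcay

lemma artanh_norm_le_add_artanh_pdistH {g : ℂ → ℂ} (hg : DifferentiableOn ℂ g HalfPlane)
    (hg1 : ∀ x ∈ HalfPlane, ‖g x‖ < 1) (ha : a ∈ HalfPlane) (hb : b ∈ HalfPlane) :
    Real.artanh ‖g a‖ ≤ Real.artanh ‖g b‖ + Real.artanh (pdistH a b) := by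
  refine (artanh_norm_le_add (hg1 a ha) (hg1 b hb)).trans (add_le_add_right ?_ _)
  exact Real.artanh_le_artanh (by linarith [norm_nonneg (diskMobius (g b) (g a))])
    (pdistH_lt_one ha hb) (norm_diskMobius_le_pdistH hg hg1 hb ha)

lemma pdistH_le_pdistH_of_mapsTo {F : ℂ → ℂ} (hF : DifferentiableOn ℂ F HalfPlane)
    (hmap : MapsTo F HalfPlane HalfPlane) (ha : a ∈ HalfPlane) (hb : b ∈ HalfPlane) :
    pdistH (F b) (F a) ≤ pdistH b a := by
  have hg : DifferentiableOn ℂ (fun x => cayley (F a) (F x)) HalfPlane :=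
    DifferentiableOn.div (hF.sub_const _) (hF.add_const _) fun x hx =>
      add_conj_ne_zero (hmap hx) (hmap ha)
  have hg1 : ∀ x ∈ HalfPlane, ‖cayley (F a) (F x)‖ < 1 := fun x hx => by
    rw [norm_cayley]; exact pdistH_lt_one (hmap hx) (hmap ha)
  simpa [norm_cayley] using norm_diskMobius_le_pdistH hg hg1 ha hb

end SchwarzPick

/-- The hyperbolic difference quotient of `F` at `z`: its modulus is the ratio of
pseudo-hyperbolic distances `pdistH (F w) (F z) / pdistH w z` off the diagonal, and
the hyperbolic distortion `DhH F z` on it. -/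
noncomputable def hypDslope (F : ℂ → ℂ) (z w : ℂ) : ℂ :=
  dslope F z w * ((w + conj z) / (F w + conj (F z)))

section HypDslope

variable {F : ℂ → ℂ} {z w : ℂ}

lemma differentiableOn_hypDslope (hF : DifferentiableOn ℂ F HalfPlane)
    (hmap : MapsTo F HalfPlane HalfPlane) (hz : z ∈ HalfPlane) :
    DifferentiableOn ℂ (hypDslope F z) HalfPlane :=
  ((Complex.differentiableOn_dslope (isOpen_halfPlane.mem_nhds hz)).2 hF).mul <|
    DifferentiableOn.div (by fun_prop) (hF.add_const _) fun x hx =>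
      add_conj_ne_zero (hmap hx) (hmap hz)

lemma norm_hypDslope_of_ne (hmap : MapsTo F HalfPlane HalfPlane) (hz : z ∈ HalfPlane)
    (hw : w ∈ HalfPlane) (hne : w ≠ z) :
    ‖hypDslope F z w‖ = pdistH (F w) (F z) / pdistH w z := by
  have h₁ : ‖w - z‖ ≠ 0 := norm_ne_zero_iff.2 (sub_ne_zero.2 hne)
  have h₂ : ‖w + conj z‖ ≠ 0 := norm_ne_zero_iff.2 (add_conj_ne_zero hw hz)
  have h₃ : ‖F w + conj (F z)‖ ≠ 0 := norm_ne_zero_iff.2 (add_conj_ne_zero (hmap hw) (hmap hz))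
  rw [hypDslope, dslope_of_ne _ hne, slope_def_field, pdistH, pdistH, norm_mul, norm_div,
    norm_div]
  field_simp

lemma norm_hypDslope_self (hz : z ∈ HalfPlane) (hFz : F z ∈ HalfPlane) :
    ‖hypDslope F z z‖ = DhH F z := by
  have hz' : 0 < z.re := hz
  have hFz' : 0 < (F z).re := hFz
  rw [hypDslope, dslope_same, norm_mul, norm_div, Complex.add_conj, Complex.add_conj,
    Complex.norm_real, Complex.norm_real, Real.norm_of_nonneg (by positivity),
    Real.norm_of_nonneg (by positivity), DhH]
  field_simp

lemma norm_hypDslope_comm (F : ℂ → ℂ) (z w : ℂ) :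
    ‖hypDslope F z w‖ = ‖hypDslope F w z‖ := by
  rcases eq_or_ne w z with rfl | hne
  · rfl
  rw [hypDslope, hypDslope, dslope_of_ne _ hne, dslope_of_ne _ hne.symm, slope_comm, norm_mul,
    norm_mul, norm_div, norm_div, ← Complex.norm_conj (w + conj z),
    ← Complex.norm_conj (F w + conj (F z))]
  simp [add_comm]

lemma norm_hypDslope_le_one (hF : DifferentiableOn ℂ F HalfPlane)
    (hmap : MapsTo F HalfPlane HalfPlane) (hz : z ∈ HalfPlane) (hw : w ∈ HalfPlane) :
    ‖hypDslope F z w‖ ≤ 1 := by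
  have off_diag : ∀ x ∈ HalfPlane, x ≠ z → ‖hypDslope F z x‖ ≤ 1 := fun x hx hne => by
    rw [norm_hypDslope_of_ne hmap hz hx hne, div_le_one (pdistH_pos hx hz hne)]
    exact pdistH_le_pdistH_of_mapsTo hF hmap hz hx
  rcases eq_or_ne w z with rfl | hne
  · have hcont : Tendsto (fun x => ‖hypDslope F w x‖) (𝓝[≠] w) (𝓝 ‖hypDslope F w w‖) :=
      ((differentiableOn_hypDslope hF hmap hw).continuousOn.continuousAt
        (isOpen_halfPlane.mem_nhds hw)).norm.tendsto.mono_left nhdsWithin_le_nhds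
    refine le_of_tendsto hcont ?_
    filter_upwards [self_mem_nhdsWithin, nhdsWithin_le_nhds (isOpen_halfPlane.mem_nhds hw)]
      with x hne hx using off_diag x hx hne
  · exact off_diag w hw hne

lemma norm_hypDslope_eq_one_of_eq_one (hF : DifferentiableOn ℂ F HalfPlane)
    (hmap : MapsTo F HalfPlane HalfPlane) (hz : z ∈ HalfPlane) {x₀ : ℂ} (hx₀ : x₀ ∈ HalfPlane)
    (h₁ : ‖hypDslope F z x₀‖ = 1) (hw : w ∈ HalfPlane) : ‖hypDslope F z w‖ = 1 := by
  have hmax : IsMaxOn (norm ∘ hypDslope F z) HalfPlane x₀ := fun x hx => by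
    simpa [h₁] using norm_hypDslope_le_one hF hmap hz hx
  simpa [h₁] using Complex.norm_eqOn_of_isPreconnected_of_isMaxOn
    convex_halfPlane.isPreconnected isOpen_halfPlane (differentiableOn_hypDslope hF hmap hz) hx₀
    hmax hw

lemma DhH_eq_one_or_lt_one (hF : DifferentiableOn ℂ F HalfPlane)
    (hmap : MapsTo F HalfPlane HalfPlane) :
    (∀ z ∈ HalfPlane, DhH F z = 1) ∨ ∀ z ∈ HalfPlane, DhH F z < 1 := by
  by_contra! h
  obtain ⟨⟨z₀, hz₀, hne⟩, ⟨w, hw, hge⟩⟩ := h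
  rw [← norm_hypDslope_self hw (hmap hw)] at hge
  have hw₁ : ‖hypDslope F w w‖ = 1 := le_antisymm (norm_hypDslope_le_one hF hmap hw hw) hge
  have hz₀₁ : ‖hypDslope F z₀ w‖ = 1 := by
    rw [norm_hypDslope_comm]
    exact norm_hypDslope_eq_one_of_eq_one hF hmap hw hw hw₁ hz₀
  exact hne <| (norm_hypDslope_self hz₀ (hmap hz₀)).symm.trans <|
    norm_hypDslope_eq_one_of_eq_one hF hmap hz₀ hw hz₀₁ hz₀

lemma norm_hypDslope_lt_one (hF : DifferentiableOn ℂ F HalfPlane)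
    (hmap : MapsTo F HalfPlane HalfPlane) (hlt : ∀ x ∈ HalfPlane, DhH F x < 1)
    (hz : z ∈ HalfPlane) (hw : w ∈ HalfPlane) : ‖hypDslope F z w‖ < 1 := by
  refine (norm_hypDslope_le_one hF hmap hz hw).lt_of_ne fun h₁ => (hlt z hz).ne ?_
  rw [← norm_hypDslope_self hz (hmap hz)]
  exact norm_hypDslope_eq_one_of_eq_one hF hmap hz hw h₁ hz

lemma artanh_DhH_le_add_hdistH (hF : DifferentiableOn ℂ F HalfPlane)
    (hmap : MapsTo F HalfPlane HalfPlane) (hlt : ∀ x ∈ HalfPlane, DhH F x < 1)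
    (hz : z ∈ HalfPlane) (hw : w ∈ HalfPlane) :
    Real.artanh (DhH F z) ≤ Real.artanh (DhH F w) + hdistH z w := by
  have hG := fun {a} (ha : a ∈ HalfPlane) => artanh_norm_le_add_artanh_pdistH
    (differentiableOn_hypDslope hF hmap ha) (fun _ => norm_hypDslope_lt_one hF hmap hlt ha) hz hw
  have h₁ := hG hz
  have h₂ := hG hw
  rw [norm_hypDslope_self hz (hmap hz), norm_hypDslope_comm] at h₁
  rw [norm_hypDslope_self hw (hmap hw)] at h₂
  rw [hdistH_eq_two_mul_artanh hz hw]
  linarith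

end HypDslope

section RealAxis

variable {z w : ℂ}

lemma hdistH_le_hdistH_of_pdistH_le (hz : z ∈ HalfPlane) (hw : w ∈ HalfPlane) {z' w' : ℂ}
    (hz' : z' ∈ HalfPlane) (hw' : w' ∈ HalfPlane) (h : pdistH z w ≤ pdistH z' w') :
    hdistH z w ≤ hdistH z' w' := by
  rw [hdistH_eq_two_mul_artanh hz hw, hdistH_eq_two_mul_artanh hz' hw']
  gcongr
  exact Real.artanh_le_artanh (by linarith [pdistH_nonneg z w]) (pdistH_lt_one hz' hw') h

lemma pdistH_ofReal {a b : ℝ} (ha : 0 < a) (hb : 0 < b) :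
    pdistH a b = |a - b| / (a + b) := by
  rw [pdistH, Complex.conj_ofReal, ← Complex.ofReal_sub, ← Complex.ofReal_add,
    Complex.norm_real, Complex.norm_real, Real.norm_eq_abs, Real.norm_eq_abs,
    abs_of_pos (add_pos ha hb)]

lemma pdistH_ofReal_norm_le (hz : z ∈ HalfPlane) (hw : w ∈ HalfPlane) :
    pdistH ‖z‖ ‖w‖ ≤ pdistH z w := by
  rw [pdistH_ofReal (norm_pos_iff.2 (ne_zero_of_mem_halfPlane hz))
    (norm_pos_iff.2 (ne_zero_of_mem_halfPlane hw)), pdistH]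
  apply div_le_div₀ (norm_nonneg _) (abs_norm_sub_norm_le z w)
    (norm_pos_iff.2 (add_conj_ne_zero hz hw))
  simpa using norm_add_le z (conj w)

lemma hdistH_ofReal_le_of_norm_le_le (hz : z ∈ HalfPlane) (hw : w ∈ HalfPlane) {t : ℝ}
    (hzt : ‖z‖ ≤ t) (htw : t ≤ ‖w‖) : hdistH ‖z‖ t ≤ hdistH z w := by
  have hz₀ : 0 < ‖z‖ := norm_pos_iff.2 (ne_zero_of_mem_halfPlane hz)
  have ht₀ : 0 < t := hz₀.trans_le hzt
  refine hdistH_le_hdistH_of_pdistH_le (ofReal_mem_halfPlane hz₀) (ofReal_mem_halfPlane ht₀)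
    hz hw (le_trans ?_ (pdistH_ofReal_norm_le hz hw))
  rw [pdistH_ofReal hz₀ ht₀, pdistH_ofReal hz₀ (ht₀.trans_le htw), abs_of_nonpos (by linarith),
    abs_of_nonpos (by linarith), div_le_div_iff₀ (by linarith) (by linarith)]
  nlinarith

lemma sq_pdistH_ofReal_norm (hz : z ∈ HalfPlane) :
    pdistH z ‖z‖ ^ 2 = (‖z‖ - z.re) / (‖z‖ + z.re) := by
  have hr : 0 < ‖z‖ := norm_pos_iff.2 (ne_zero_of_mem_halfPlane hz)
  have hre : 0 < z.re := hz
  have hnorm : ‖z‖ ^ 2 = z.re ^ 2 + z.im ^ 2 := by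
    rw [Complex.sq_norm, Complex.normSq_apply]; ring
  rw [pdistH, Complex.conj_ofReal, div_pow, Complex.sq_norm, Complex.sq_norm,
    Complex.normSq_apply, Complex.normSq_apply]
  simp only [Complex.sub_re, Complex.sub_im, Complex.add_re, Complex.add_im, Complex.ofReal_re,
    Complex.ofReal_im]
  rw [div_eq_div_iff (by nlinarith) (by positivity)]
  nlinarith

lemma hdistH_ofReal_norm_le {θ : ℝ} (hθ : θ < Real.pi / 2) (hz : z ∈ HalfPlane)
    (harg : |Complex.arg z| < θ) :
    hdistH z ‖z‖ ≤ 2 * Real.artanh √((1 - Real.cos θ) / (1 + Real.cos θ)) := by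
  have hr : 0 < ‖z‖ := norm_pos_iff.2 (ne_zero_of_mem_halfPlane hz)
  have hcos : 0 < Real.cos θ :=
    Real.cos_pos_of_mem_Ioo ⟨by linarith [abs_nonneg z.arg, Real.pi_pos], hθ⟩
  have hre : ‖z‖ * Real.cos θ ≤ z.re := by
    rw [← Complex.norm_mul_cos_arg z, ← Real.cos_abs z.arg]
    gcongr
    exact Real.cos_le_cos_of_nonneg_of_le_pi (abs_nonneg _) (by linarith [Real.pi_pos]) harg.le
  have hre₀ : 0 < z.re := hz
  have hbound : pdistH z ‖z‖ ≤ √((1 - Real.cos θ) / (1 + Real.cos θ)) := by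
    rw [Real.le_sqrt (pdistH_nonneg _ _) (div_nonneg (by linarith [Real.cos_le_one θ])
      (by linarith)), sq_pdistH_ofReal_norm hz, div_le_div_iff₀ (by linarith) (by linarith)]
    nlinarith
  rw [hdistH_eq_two_mul_artanh hz (ofReal_mem_halfPlane hr)]
  gcongr
  refine Real.artanh_le_artanh (by linarith [pdistH_nonneg z ‖z‖]) ?_ hbound
  rw [Real.sqrt_lt' one_pos, one_pow, div_lt_one (by linarith)]
  linarith

end RealAxis

lemma Real.tendsto_artanh_nhdsLT_one : Tendsto Real.artanh (𝓝[<] 1) atTop := by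
  refine tendsto_atTop.2 fun A => ?_
  filter_upwards [Ioo_mem_nhdsLT (Real.tanh_lt_one A)] with x hx
  rw [← Real.artanh_tanh A]
  exact Real.artanh_le_artanh (Real.neg_one_lt_tanh A) hx.2 hx.1.le

lemma Real.mem_Ioo_of_artanh_pos {x : ℝ} (h : 0 < Real.artanh x) : x ∈ Ioo 0 1 := by
  -- `artanh` is `0` on `x ≤ -1` and on `1 ≤ x`.
  refine ⟨lt_of_not_ge fun hx => h.not_ge (Real.artanh_nonpos hx), lt_of_not_ge fun hx => ?_⟩
  exact h.ne' (Real.artanh_eq_zero_iff.2 (Or.inr (Or.inr hx)))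

lemma tendsto_nhds_one_of_tendsto_artanh {α : Type*} {l : Filter α} {f : α → ℝ}
    (h : Tendsto (fun x => Real.artanh (f x)) l atTop) : Tendsto f l (𝓝 1) := by
  refine tendsto_order.2 ⟨fun a ha => ?_, fun a ha => ?_⟩
  · set b := max a 0
    have hb : b ∈ Ioo (-1) 1 := ⟨by simp [b], max_lt ha one_pos⟩
    filter_upwards [h.eventually_gt_atTop (Real.artanh b)] with x hx
    have hfx := Real.mem_Ioo_of_artanh_pos ((Real.artanh_nonneg (le_max_right a 0)).trans_lt hx)
    exact (le_max_left a 0).trans_lt <|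
      (Real.artanh_lt_artanh_iff hb ⟨by linarith [hfx.1], hfx.2⟩).1 hx
  · filter_upwards [h.eventually_gt_atTop 0] with x hx
    exact (Real.mem_Ioo_of_artanh_pos hx).2.trans ha

lemma exists_le_lt_succ_of_tendsto_atTop {r : ℕ → ℝ} (hr : Tendsto r atTop atTop) {N : ℕ}
    {t : ℝ} (ht : r N ≤ t) : ∃ n ≥ N, r n ≤ t ∧ t < r (n + 1) := by
  by_contra! h
  have hle : ∀ n ≥ N, r n ≤ t := fun n hn => Nat.le_induction ht (fun m hm => h m hm) n hn
  obtain ⟨m, hm⟩ := eventually_atTop.1 (hr.eventually_gt_atTop t)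
  exact (hm (max m N) (le_max_left m N)).not_ge (hle _ (le_max_right m N))

lemma tendsto_atTop_of_le_add_of_mem_Ico {r u : ℕ → ℝ} {f : ℝ → ℝ} {K : ℝ}
    (hr : Tendsto r atTop atTop) (hu : Tendsto u atTop atTop)
    (h : ∀ n t, r n ≤ t → t < r (n + 1) → u n ≤ f t + K) : Tendsto f atTop atTop := by
  refine tendsto_atTop.2 fun A => ?_
  obtain ⟨N, hN⟩ := eventually_atTop.1 (tendsto_atTop.1 hu (A + K))
  refine eventually_atTop.2 ⟨r N, fun t ht => ?_⟩
  obtain ⟨n, hn, hnt, htn⟩ := exists_le_lt_succ_of_tendsto_atTop hr ht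
  linarith [hN n hn, h n t hnt htn]

theorem lindelof_for_distortion (F : ℂ → ℂ)
    (hF : DifferentiableOn ℂ F HalfPlane)
    (hmap : MapsTo F HalfPlane HalfPlane)
    (θ M : ℝ) (hθ : θ < Real.pi / 2)
    (ζ : ℕ → ℂ)
    (hmem : ∀ n, ζ n ∈ HalfPlane)
    (hsector : ∀ n, |Complex.arg (ζ n)| < θ)
    (hinf : Tendsto (fun n => ‖ζ n‖) atTop atTop)
    (hstep : ∀ n, hdistH (ζ n) (ζ (n + 1)) ≤ M)
    (hdh : Tendsto (fun n => DhH F (ζ n)) atTop (nhds 1)) :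
    Tendsto (fun t : ℝ => DhH F (t : ℂ)) atTop (nhds 1) := by
  rcases DhH_eq_one_or_lt_one hF hmap with hone | hlt
  · refine tendsto_const_nhds.congr' ?_
    filter_upwards [eventually_gt_atTop 0] with t ht
    exact (hone _ (ofReal_mem_halfPlane ht)).symm
  set C := 2 * Real.artanh √((1 - Real.cos θ) / (1 + Real.cos θ))
  have hdiv : Tendsto (fun n => Real.artanh (DhH F (ζ n))) atTop atTop :=
    Real.tendsto_artanh_nhdsLT_one.comp <|
      tendsto_nhdsWithin_iff.2 ⟨hdh, .of_forall fun n => hlt _ (hmem n)⟩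
  refine tendsto_nhds_one_of_tendsto_artanh <|
    tendsto_atTop_of_le_add_of_mem_Ico (K := C + M) hinf hdiv fun n t hnt htn => ?_
  have hr : 0 < ‖ζ n‖ := norm_pos_iff.2 (ne_zero_of_mem_halfPlane (hmem n))
  have hrmem := ofReal_mem_halfPlane hr
  have htmem := ofReal_mem_halfPlane (hr.trans_le hnt)
  have h₁ := artanh_DhH_le_add_hdistH hF hmap hlt (hmem n) hrmem
  have h₂ := artanh_DhH_le_add_hdistH hF hmap hlt hrmem htmem
  have hsec := hdistH_ofReal_norm_le hθ (hmem n) (hsector n)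
  have hreal := hdistH_ofReal_le_of_norm_le_le (hmem n) (hmem (n + 1)) hnt htn.le
  linarith [hstep n]
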